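/- arXiv:2404.14706 — 2 statements merged into one kernel-verified Lean document; each statement's English description precedes it below -/
import Mathlib

section
/- Let A ≠ 0, B ≠ 0 and ξc > 0 with B² > 4|A|ξc. Then the two roots r₁ < 0 < r₂ of |A r² + B r| = ξc that are closest to zero (i.e., the root of smallest absolute value on each side of 0) satisfy |r₂ − r₁| ≥ 2ξc/|B|. -/
/-!
With `f r = A r² + B r` we have `f y - f x = (y - x) (A (x + y) + B)`, and `|f r₁| = |f r₂|`
leaves two cases. If `f r₁ = -f r₂`, then `(A (r₁ + r₂) + B)² = B² - A² (r₂ - r₁)²`, so the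
secant slope is at most `|B|` in absolute value and `2 ξc ≤ |B| (r₂ - r₁)`. If `f r₁ = f r₂`, the
two roots are symmetric about the vertex, `B = -A (r₁ + r₂)`, hence `|B| ≤ |A| (r₂ - r₁)` as
`r₁ < 0 < r₂`; then `B² > 4 |A| ξc` even gives `4 ξc < |B| (r₂ - r₁)`.
-/

lemma quad_sub_quad (A B x y : ℝ) :
    (A * y ^ 2 + B * y) - (A * x ^ 2 + B * x) = (y - x) * (A * (x + y) + B) := by
  ring

lemma two_mul_abs_quad_le_of_quad_eq_neg {A B x y : ℝ}
    (h : A * x ^ 2 + B * x = -(A * y ^ 2 + B * y)) :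
    2 * |A * y ^ 2 + B * y| ≤ |y - x| * |B| := by
  have hslope : (A * (x + y) + B) ^ 2 + A ^ 2 * (y - x) ^ 2 = B ^ 2 := by
    linear_combination (2 * A) * h
  have hslope_le : |A * (x + y) + B| ≤ |B| :=
    sq_le_sq.mp (by nlinarith [sq_nonneg (A * (y - x))])
  calc 2 * |A * y ^ 2 + B * y|
      = |(A * y ^ 2 + B * y) - (A * x ^ 2 + B * x)| := by
        rw [h, sub_neg_eq_add, ← two_mul, abs_mul, abs_two]
    _ = |y - x| * |A * (x + y) + B| := by rw [quad_sub_quad, abs_mul]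
    _ ≤ |y - x| * |B| := by gcongr

lemma abs_le_of_quad_eq {A B x y : ℝ} (hx : x < 0) (hy : 0 < y)
    (h : A * x ^ 2 + B * x = A * y ^ 2 + B * y) :
    |B| ≤ |A| * (y - x) := by
  have hvertex : A * (x + y) + B = 0 := by
    have := quad_sub_quad A B x y
    rw [h, sub_self, zero_eq_mul] at this
    exact this.resolve_left (by linarith)
  calc |B| = |A| * |x + y| := by rw [← abs_mul, eq_neg_of_add_eq_zero_right hvertex, abs_neg]
    _ ≤ |A| * (y - x) := by gcongr; exact abs_le.mpr ⟨by linarith, by linarith⟩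

theorem stmt1_general (A B ξc r₁ r₂ : ℝ)
    (hbranch : B ^ 2 > 4 * |A| * ξc)
    (hr₁neg : r₁ < 0) (hr₂pos : 0 < r₂)
    (h₁ : |A * r₁ ^ 2 + B * r₁| = ξc)
    (h₂ : |A * r₂ ^ 2 + B * r₂| = ξc) :
    |r₂ - r₁| ≥ 2 * ξc / |B| := by
  have hξ : 0 ≤ ξc := h₁ ▸ abs_nonneg _
  have hB : 0 < |B| := by
    rw [abs_pos]; rintro rfl; nlinarith [abs_nonneg A]
  rw [ge_iff_le, div_le_iff₀ hB]
  rcases abs_eq_abs.mp (h₁.trans h₂.symm) with hsame | hopp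
  · have hgap := abs_le_of_quad_eq hr₁neg hr₂pos hsame
    have hsq : B ^ 2 ≤ |A| * ((r₂ - r₁) * |B|) := by
      rw [← sq_abs, sq]; nlinarith
    rw [abs_of_pos (sub_pos.mpr (hr₁neg.trans hr₂pos))]
    nlinarith [abs_nonneg A]
  · simpa [h₂] using two_mul_abs_quad_le_of_quad_eq_neg hopp

/-- If `A ≠ 0`, `B ≠ 0`, `ξc > 0` and `B² > 4|A|ξc`, then the two roots
`r₁ < 0 < r₂` of `|A r² + B r| = ξc` closest to zero (no further root of the
equation lies strictly between them) satisfy `|r₂ - r₁| ≥ 2ξc/|B|`. -/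
theorem stmt1 (A B ξc r₁ r₂ : ℝ) (hA : A ≠ 0) (hB : B ≠ 0) (hξ : 0 < ξc)
    (hbranch : B ^ 2 > 4 * |A| * ξc)
    (hr₁neg : r₁ < 0) (hr₂pos : 0 < r₂)
    (h₁ : |A * r₁ ^ 2 + B * r₁| = ξc)
    (h₂ : |A * r₂ ^ 2 + B * r₂| = ξc)
    (hclosest : ∀ r, r₁ < r → r < r₂ → |A * r ^ 2 + B * r| ≠ ξc) :
    |r₂ - r₁| ≥ 2 * ξc / |B| :=
  stmt1_general A B ξc r₁ r₂ hbranch hr₁neg hr₂pos h₁ h₂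
end

section
/- Let h(R) = (N̂₁ᵀ(LR-direction))^m (N̂₂ᵀ(UR-direction)) / (‖LR‖ + ‖UR‖)² viewed as a smooth function of the reflecting-element position R (on the domain where both unit-vector conditions and positivity hold). Then the first-order relative growth rate ξ(ΔR) = (h(R+ΔR) − h(R))/h(R) satisfies ξ(ΔR) = s₁ᵀΔR + o(‖ΔR‖) with gradient vector s₁ = (m/(d₁ cos θ)) N̂₁ + (1/(d₂ cos φ)) N̂₂ − (m/d₁ + 2/(d₁+d₂)) û_L − (1/d₂ + 2/(d₁+d₂)) û_U, where d₁ = ‖LR‖, d₂ = ‖UR‖, û_L, û_U are the unit vectors from L and U toward R, cos θ = N̂₁ᵀû_L, and cos φ = N̂₂ᵀû_U. -/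
/-!
Write `h = cos θ ^ m * cos φ / (d₁ + d₂) ^ 2`. The relative increment `(h(R+ΔR) - h(R))/h(R)` is,
to first order, `⟪∇ log h(R), ΔR⟫`, and the logarithmic gradient turns the quotient of products into
the sum `m ∇ log cos θ + ∇ log cos φ - 2 ∇ log (d₁ + d₂)`. Writing
`cos θ = ⟪N̂₁, R - L⟫ / ‖R - L‖` gives `∇ log cos θ = N̂₁ / (d₁ cos θ) - û_L / d₁`, while
`∇ (d₁ + d₂) = û_L + û_U`; collecting terms gives `s₁`.
-/

open Asymptotics RealInnerProductSpace

variable {E : Type*} [NormedAddCommGroup E] [InnerProductSpace ℝ E] {f g : E → ℝ} {v w x : E}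

/-- `v` is the gradient of `log f` at `x`, stated without logarithms; it says nothing when
`f x = 0`. -/
def HasLogGradientAt (f : E → ℝ) (v x : E) : Prop :=
  HasFDerivAt f (f x • innerSL ℝ v) x

theorem HasFDerivAt.hasLogGradientAt (hf : HasFDerivAt f (innerSL ℝ w) x) (hx : f x ≠ 0) :
    HasLogGradientAt f ((f x)⁻¹ • w) x := by
  rwa [HasLogGradientAt, map_smul, smul_smul, mul_inv_cancel₀ hx, one_smul]

namespace HasLogGradientAt

theorem mul (hf : HasLogGradientAt f v x) (hg : HasLogGradientAt g w x) :
    HasLogGradientAt (fun X => f X * g X) (v + w) x :=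
  (HasFDerivAt.mul hf hg).congr_fderiv <| by
    ext
    simp only [map_add, add_apply, smul_apply, coe_innerSL_apply, smul_eq_mul]
    ring

theorem inv (hf : HasLogGradientAt f v x) (hx : f x ≠ 0) :
    HasLogGradientAt (fun X => (f X)⁻¹) (-v) x :=
  ((hasDerivAt_inv hx).comp_hasFDerivAt x hf).congr_fderiv <| by
    ext
    simp only [neg_smul, neg_apply, smul_apply, coe_innerSL_apply, smul_eq_mul, map_neg, smul_neg,
      neg_inj]
    field_simp

theorem div (hf : HasLogGradientAt f v x) (hg : HasLogGradientAt g w x) (hx : g x ≠ 0) :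
    HasLogGradientAt (fun X => f X / g X) (v - w) x := by
  simpa only [div_eq_mul_inv, sub_eq_add_neg] using hf.mul (hg.inv hx)

theorem rpow_const (hf : HasLogGradientAt f v x) (p : ℝ) (hx : f x ≠ 0) :
    HasLogGradientAt (fun X => f X ^ p) (p • v) x :=
  (HasFDerivAt.rpow_const hf (Or.inl hx)).congr_fderiv <| by
    ext
    simp only [Real.rpow_sub_one hx, map_smul, smul_apply, coe_innerSL_apply, smul_eq_mul]
    field_simp

theorem pow (hf : HasLogGradientAt f v x) (n : ℕ) :
    HasLogGradientAt (fun X => f X ^ n) ((n : ℝ) • v) x :=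
  (HasFDerivAt.pow hf n).congr_fderiv <| by
    ext
    rcases n with _ | n
    · simp
    · simp only [add_tsub_cancel_right, nsmul_eq_mul, Nat.cast_add, Nat.cast_one, map_smul,
        smul_apply, coe_innerSL_apply, smul_eq_mul]
      ring

theorem isLittleO_relIncrement (hf : HasLogGradientAt f v x) (hx : f x ≠ 0) :
    (fun Δ => (f (x + Δ) - f x) / f x - ⟪v, Δ⟫) =o[nhds 0] fun Δ => ‖Δ‖ := by
  have hrel : (fun Δ => (f (x + Δ) - f x) / f x - ⟪v, Δ⟫)
      = (f x)⁻¹ • fun Δ => f (x + Δ) - f x - (f x • innerSL ℝ v) Δ := by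
    ext Δ
    simp only [Pi.smul_apply, smul_apply, coe_innerSL_apply, smul_eq_mul]
    field_simp
  rw [hrel]
  exact ((hasFDerivAt_iff_isLittleO_nhds_zero.mp hf).const_smul_left _).norm_right

end HasLogGradientAt

theorem hasFDerivAt_norm_sub {C : E} (hx : x ≠ C) :
    HasFDerivAt (fun X => ‖X - C‖) (innerSL ℝ (‖x - C‖⁻¹ • (x - C))) x := by
  have hd : ‖x - C‖ ≠ 0 := norm_ne_zero_iff.mpr (sub_ne_zero.mpr hx)
  have hsq := (hasFDerivAt_sub_const (𝕜 := ℝ) (x := x) C).norm_sq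
  have hsqrt := (Real.hasDerivAt_sqrt (pow_ne_zero 2 hd)).comp_hasFDerivAt x hsq
  simp only [Function.comp_def, Real.sqrt_sq (norm_nonneg _)] at hsqrt
  refine hsqrt.congr_fderiv ?_
  ext v
  simp only [map_smul, smul_apply, coe_innerSL_apply, smul_eq_mul, nsmul_eq_mul,
    Nat.cast_ofNat, ContinuousLinearMap.comp_id]
  field_simp

theorem hasFDerivAt_inner_sub (N C x : E) :
    HasFDerivAt (fun X => ⟪N, X - C⟫) (innerSL ℝ N) x := by
  simpa [Function.comp_def] using (innerSL ℝ N).hasFDerivAt.comp x (hasFDerivAt_sub_const C)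

noncomputable def directionCosine (N C X : E) : ℝ :=
  ⟪N, ‖X - C‖⁻¹ • (X - C)⟫

theorem hasLogGradientAt_directionCosine {N C : E} (hx : x ≠ C)
    (hc : directionCosine N C x ≠ 0) :
    HasLogGradientAt (directionCosine N C)
      ((‖x - C‖ * directionCosine N C x)⁻¹ • N - ‖x - C‖⁻¹ • ‖x - C‖⁻¹ • (x - C)) x := by
  have hd : ‖x - C‖ ≠ 0 := norm_ne_zero_iff.mpr (sub_ne_zero.mpr hx)
  have hinner : ⟪N, x - C⟫ = ‖x - C‖ * directionCosine N C x := by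
    rw [directionCosine, real_inner_smul_right]; field_simp
  have hquot : directionCosine N C = fun X => ⟪N, X - C⟫ / ‖X - C‖ := by
    ext X; rw [directionCosine, real_inner_smul_right, div_eq_inv_mul]
  have hnum := (hasFDerivAt_inner_sub N C x).hasLogGradientAt (hinner ▸ mul_ne_zero hd hc)
  rw [← hinner, hquot]
  exact hnum.div ((hasFDerivAt_norm_sub hx).hasLogGradientAt hd) hd

theorem stmt11_general (L U N₁ N₂ : EuclideanSpace ℝ (Fin 3)) (m : ℝ)
    (R : EuclideanSpace ℝ (Fin 3)) (hRL : R ≠ L) (hRU : R ≠ U)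
    (d₁ d₂ : ℝ) (hd₁ : d₁ = ‖R - L‖) (hd₂ : d₂ = ‖R - U‖)
    (uL uU : EuclideanSpace ℝ (Fin 3))
    (huL : uL = d₁⁻¹ • (R - L)) (huU : uU = d₂⁻¹ • (R - U))
    (cθ cφ : ℝ) (hcθ : cθ = ⟪N₁, uL⟫) (hcφ : cφ = ⟪N₂, uU⟫)
    (hcθpos : 0 < cθ) (hcφpos : 0 < cφ)
    (h : EuclideanSpace ℝ (Fin 3) → ℝ)
    (hh : ∀ X : EuclideanSpace ℝ (Fin 3),
      h X = (⟪N₁, ‖X - L‖⁻¹ • (X - L)⟫ : ℝ) ^ m *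
        (⟪N₂, ‖X - U‖⁻¹ • (X - U)⟫ : ℝ) / (‖X - L‖ + ‖X - U‖) ^ 2)
    (s₁ : EuclideanSpace ℝ (Fin 3))
    (hs₁ : s₁ = (m / (d₁ * cθ)) • N₁ + (1 / (d₂ * cφ)) • N₂
        - (m / d₁ + 2 / (d₁ + d₂)) • uL - (1 / d₂ + 2 / (d₁ + d₂)) • uU) :
    (fun ΔR : EuclideanSpace ℝ (Fin 3) =>
        (h (R + ΔR) - h R) / h R - ⟪s₁, ΔR⟫) =o[nhds 0]
      fun ΔR : EuclideanSpace ℝ (Fin 3) => ‖ΔR‖ := by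
  have hd₁pos : 0 < d₁ := hd₁ ▸ norm_pos_iff.mpr (sub_ne_zero.mpr hRL)
  have hd₂pos : 0 < d₂ := hd₂ ▸ norm_pos_iff.mpr (sub_ne_zero.mpr hRU)
  have hθR : directionCosine N₁ L R = cθ := by rw [hcθ, huL, hd₁]; rfl
  have hφR : directionCosine N₂ U R = cφ := by rw [hcφ, huU, hd₂]; rfl
  have hθ : HasLogGradientAt (directionCosine N₁ L) ((d₁ * cθ)⁻¹ • N₁ - d₁⁻¹ • uL) R := by
    have := hasLogGradientAt_directionCosine hRL (hθR ▸ hcθpos.ne')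
    rwa [hθR, ← hd₁, ← huL] at this
  have hφ : HasLogGradientAt (directionCosine N₂ U) ((d₂ * cφ)⁻¹ • N₂ - d₂⁻¹ • uU) R := by
    have := hasLogGradientAt_directionCosine hRU (hφR ▸ hcφpos.ne')
    rwa [hφR, ← hd₂, ← huU] at this
  have hS : HasLogGradientAt (fun X => ‖X - L‖ + ‖X - U‖) ((d₁ + d₂)⁻¹ • (uL + uU)) R := by
    have hsum := (hasFDerivAt_norm_sub hRL).fun_add (hasFDerivAt_norm_sub hRU)
    rw [← map_add, ← hd₁, ← hd₂, ← huL, ← huU] at hsum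
    simpa only [← hd₁, ← hd₂] using hsum.hasLogGradientAt (by simp only [← hd₁, ← hd₂]; positivity)
  have hgain : HasLogGradientAt h s₁ R := by
    have hfun : h = fun X => directionCosine N₁ L X ^ m * directionCosine N₂ U X /
        (‖X - L‖ + ‖X - U‖) ^ 2 := funext hh
    rw [hfun, hs₁]
    convert ((hθ.rpow_const m (hθR ▸ hcθpos.ne')).mul hφ).div (hS.pow 2)
      (by rw [← hd₁, ← hd₂]; positivity) using 1
    module
  refine hgain.isLittleO_relIncrement ?_
  rw [hh R, ← hd₁, ← hd₂, ← huL, ← huU, ← hcθ, ← hcφ]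
  positivity

/-- First-order expansion of the relative growth rate of the Lambertian
channel gain `h(R) = (N̂₁ᵀû_L)^m (N̂₂ᵀû_U)/(d₁+d₂)²`: one has
`(h(R+ΔR) - h(R))/h(R) = s₁ᵀΔR + o(‖ΔR‖)`, with the stated gradient `s₁`. -/
theorem stmt11 (L U N₁ N₂ : EuclideanSpace ℝ (Fin 3)) (m : ℝ) (hm : 0 < m)
    (hN₁ : ‖N₁‖ = 1) (hN₂ : ‖N₂‖ = 1)
    (R : EuclideanSpace ℝ (Fin 3)) (hRL : R ≠ L) (hRU : R ≠ U)
    (d₁ d₂ : ℝ) (hd₁ : d₁ = ‖R - L‖) (hd₂ : d₂ = ‖R - U‖)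
    (uL uU : EuclideanSpace ℝ (Fin 3))
    (huL : uL = d₁⁻¹ • (R - L)) (huU : uU = d₂⁻¹ • (R - U))
    (cθ cφ : ℝ) (hcθ : cθ = ⟪N₁, uL⟫) (hcφ : cφ = ⟪N₂, uU⟫)
    (hcθpos : 0 < cθ) (hcφpos : 0 < cφ)
    (h : EuclideanSpace ℝ (Fin 3) → ℝ)
    (hh : ∀ X : EuclideanSpace ℝ (Fin 3),
      h X = (⟪N₁, ‖X - L‖⁻¹ • (X - L)⟫ : ℝ) ^ m *
        (⟪N₂, ‖X - U‖⁻¹ • (X - U)⟫ : ℝ) / (‖X - L‖ + ‖X - U‖) ^ 2)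
    (s₁ : EuclideanSpace ℝ (Fin 3))
    (hs₁ : s₁ = (m / (d₁ * cθ)) • N₁ + (1 / (d₂ * cφ)) • N₂
        - (m / d₁ + 2 / (d₁ + d₂)) • uL - (1 / d₂ + 2 / (d₁ + d₂)) • uU) :
    (fun ΔR : EuclideanSpace ℝ (Fin 3) =>
        (h (R + ΔR) - h R) / h R - ⟪s₁, ΔR⟫) =o[nhds 0]
      fun ΔR : EuclideanSpace ℝ (Fin 3) => ‖ΔR‖ :=
  stmt11_general L U N₁ N₂ m R hRL hRU d₁ d₂ hd₁ hd₂ uL uU huL huU cθ cφ hcθ hcφ hcθpos hcφpos h hh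
    s₁ hs₁
end
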